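/- Every (not necessarily linear) weak-2-local derivation on M_n(ℂ) is a linear derivation. -/

import Mathlib

open Matrix

variable {n : ℕ}

/-- A linear derivation on `Mₙ(ℂ)`. -/
def IsMatrixDerivation (D : Matrix (Fin n) (Fin n) ℂ →ₗ[ℂ] Matrix (Fin n) (Fin n) ℂ) : Prop :=
  ∀ x y, D (x * y) = D x * y + x * D y

/-- A (non-necessarily linear) weak-2-local derivation on `Mₙ(ℂ)`. -/
def IsWeak2LocalDerivation (Δ : Matrix (Fin n) (Fin n) ℂ → Matrix (Fin n) (Fin n) ℂ) : Prop :=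
  ∀ a b : Matrix (Fin n) (Fin n) ℂ, ∀ φ : Matrix (Fin n) (Fin n) ℂ →ₗ[ℂ] ℂ,
    ∃ D : Matrix (Fin n) (Fin n) ℂ →ₗ[ℂ] Matrix (Fin n) (Fin n) ℂ,
      IsMatrixDerivation D ∧ φ (Δ a) = φ (D a) ∧ φ (Δ b) = φ (D b)

/-!
Testing `Δ` against the functionals `x ↦ tr (t x)` and using that every derivation of `Mₙ` is
inner (`tr (t (m c - c m)) = 0` when `t` commutes with `c`) gives `tr (t Δ a) = tr (t Δ b)`
whenever `t` commutes with `a - b`. With `t = a - b` this yields `tr (a Δ b) = -tr (b Δ a)`, which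
is linear in `b`; as the trace pairing is nondegenerate, `Δ` is linear.

A linear map `D` with `tr (t D a) = 0` for all commuting `t, a` is a derivation. For an idempotent
`p` with `q = 1 - p`, the square-zero elements `y` of the Peirce corners `p M q` and `q M p` give
idempotents `p + y`, `q + y`, and each idempotent `e` commutes with `e u e`; these commuting pairs
yield `D (p x) = D p x + p D x`. Idempotents span `Mₙ`, so the Leibniz rule holds everywhere.
-/

namespace Matrix

variable {ι R : Type*} [CommRing R]

theorem single_eq_smul_single_one [DecidableEq ι] (i j : ι) (c : R) :
    single i j c = c • single i j 1 := by
  rw [smul_single, smul_eq_mul, mul_one]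

variable [Fintype ι]

/-- For linear `f` over a field this says `f a ∈ range (ad a)` for every `a`, i.e. `f` is a local
derivation. -/
def IsTraceOrthogonalToCentralizer (f : Matrix ι ι R → Matrix ι ι R) : Prop :=
  ∀ t a, Commute t a → (t * f a).trace = 0

theorem trace_mul_apply_eq_neg {f : Matrix ι ι R → Matrix ι ι R}
    (h₀ : IsTraceOrthogonalToCentralizer f)
    (h₁ : ∀ t a b, Commute t (a - b) → (t * f a).trace = (t * f b).trace) (a b : Matrix ι ι R) :
    (a * f b).trace = -(b * f a).trace := by
  have h := h₁ (b - a) b a (Commute.refl _)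
  rw [sub_mul, sub_mul, trace_sub, trace_sub, h₀ b b (Commute.refl b),
    h₀ a a (Commute.refl a)] at h
  linear_combination -h

theorem isLinearMap_of_trace_mul_apply_eq_neg {f : Matrix ι ι R → Matrix ι ι R}
    (hf : ∀ a b, (a * f b).trace = -(b * f a).trace) : IsLinearMap R f where
  map_add x y := ext_iff_trace_mul_left.2 fun a => by
    simp only [hf a, mul_add, add_mul, trace_add, neg_add]
  map_smul c x := ext_iff_trace_mul_left.2 fun a => by
    simp only [hf a, mul_smul_comm, smul_mul_assoc, trace_smul, smul_neg]

theorem trace_mul_mul_sub_mul_eq_zero_of_commute {t c : Matrix ι ι R} (m : Matrix ι ι R)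
    (h : Commute t c) : (t * (m * c - c * m)).trace = 0 := by
  rw [mul_sub, trace_sub, sub_eq_zero, ← mul_assoc, trace_mul_comm (t * m), ← mul_assoc, ← h.eq,
    mul_assoc]

theorem IsTraceOrthogonalToCentralizer.trace_mul_map_eq_neg {D : Matrix ι ι R →ₗ[R] Matrix ι ι R}
    (hD : IsTraceOrthogonalToCentralizer D) (a b : Matrix ι ι R) :
    (a * D b).trace = -(b * D a).trace :=
  trace_mul_apply_eq_neg hD (fun t a b h => by
    rw [← sub_eq_zero, ← trace_sub, ← mul_sub, ← map_sub]; exact hD t _ h) a b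

variable [DecidableEq ι]

theorem exists_eq_mul_sub_mul_of_map_mul (D : Matrix ι ι R →ₗ[R] Matrix ι ι R)
    (hD : ∀ x y, D (x * y) = D x * y + x * D y) : ∃ m, ∀ x, D x = m * x - x * m := by
  cases isEmpty_or_nonempty ι
  · exact ⟨0, fun _ => Subsingleton.elim _ _⟩
  obtain ⟨o⟩ := ‹Nonempty ι›
  -- for `D = ad m₀` this is `m₀ - m₀ o o • 1`
  set m := ∑ k, D (single k o 1) * single o k 1
  have hmx : ∀ x, ∑ k, D (x * single k o 1) * single o k 1 = m * x := by
    intro x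
    induction x using Matrix.induction_on' with
    | h_zero => simp
    | h_add x y hx hy => simp only [mul_add, add_mul, map_add, Finset.sum_add_distrib, hx, hy]
    | h_std_basis a b c =>
      rw [Finset.sum_mul, Finset.sum_eq_single b, Finset.sum_eq_single a]
      · rw [single_mul_single_same, mul_assoc, single_mul_single_same, mul_one, one_mul,
          single_eq_smul_single_one a o c, single_eq_smul_single_one o b c, map_smul, smul_mul_assoc,
          mul_smul_comm]
      · intro k _ hk; simp [mul_assoc, hk]
      · simp
      · intro k _ hk; simp [single_mul_single_of_ne _ _ _ _ (Ne.symm hk)]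
      · simp
  refine ⟨m, fun x => ?_⟩
  have hxm : x * m = ∑ k, D (x * single k o 1) * single o k 1 - D x := by
    simp only [m, hD, add_mul, Finset.sum_add_distrib, mul_assoc,
      single_mul_single_same, ← Finset.mul_sum, sum_single_one, mul_one]
    abel
  rw [hxm, hmx]
  abel

namespace IsTraceOrthogonalToCentralizer

variable {D : Matrix ι ι R →ₗ[R] Matrix ι ι R} (hD : IsTraceOrthogonalToCentralizer D)
include hD

theorem map_one : D 1 = 0 :=
  ext_iff_trace_mul_left.2 fun t => by rw [hD t 1 (Commute.one_right t), mul_zero, trace_zero]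

theorem trace_offDiag_mul_map_diag {p q : Matrix ι ι R} (hp : IsIdempotentElem p) (hqp : q * p = 0)
    (a b : Matrix ι ι R) :
    (p * a * q * D (p * b * p)).trace = (p * b * p * a * q * D p).trace := by
  -- `e := p + p a q` is idempotent, and `e (p b p) e` is the second element below
  have hqpx : ∀ x, q * (p * x) = 0 := fun x => by rw [← mul_assoc, hqp, zero_mul]
  have h := hD (p + p * a * q) (p * b * p + p * b * p * a * q) (by
    simp only [Commute, SemiconjBy, mul_add, add_mul, mul_assoc, hp.mul_self_mul, hp.eq, hqpx, hqp,
      mul_zero, add_zero])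
  have h₁ := hD p (p * b * p) (by simp only [Commute, SemiconjBy, mul_assoc, hp.mul_self_mul, hp.eq])
  have h₂ := hD (p * a * q) (p * b * p * a * q) (by
    simp only [Commute, SemiconjBy, mul_assoc, hqpx, mul_zero])
  have h₃ := hD.trace_mul_map_eq_neg p (p * b * p * a * q)
  simp only [map_add, mul_add, add_mul, trace_add, h₁, h₂, h₃] at h
  linear_combination h

theorem trace_diag_mul_map_offDiag {p q : Matrix ι ι R} (hq : IsIdempotentElem q) (hqp : q * p = 0)
    (a b : Matrix ι ι R) :
    (q * a * q * D (p * b * q)).trace = -(p * b * q * a * q * D q).trace := by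
  -- `e := q + p b q` is idempotent, and `e (q a q) e` is the second element below
  have hqpx : ∀ x, q * (p * x) = 0 := fun x => by rw [← mul_assoc, hqp, zero_mul]
  have h := hD (q + p * b * q) (q * a * q + p * b * q * a * q) (by
    simp only [Commute, SemiconjBy, mul_add, add_mul, mul_assoc, hq.mul_self_mul, hq.eq, hqpx,
      mul_zero, add_zero])
  have h₁ := hD q (q * a * q) (by simp only [Commute, SemiconjBy, mul_assoc, hq.mul_self_mul, hq.eq])
  have h₂ := hD (p * b * q) (p * b * q * a * q) (by
    simp only [Commute, SemiconjBy, mul_assoc, hqpx, mul_zero])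
  have h₃ := hD.trace_mul_map_eq_neg q (p * b * q * a * q)
  have h₄ := hD.trace_mul_map_eq_neg (q * a * q) (p * b * q)
  simp only [map_add, mul_add, add_mul, trace_add, h₁, h₂, h₃] at h
  linear_combination h₄ - h

theorem trace_mul_one_sub_mul_map_mul {p : Matrix ι ι R} (hp : IsIdempotentElem p)
    (a b : Matrix ι ι R) :
    (a * (1 - p) * D (p * b)).trace = (p * b * a * (1 - p) * D p).trace := by
  set q := 1 - p with hq
  have hqp : q * p = 0 := hp.one_sub_mul_self
  have hpq : p * q = 0 := hp.mul_one_sub_self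
  have hqpx : ∀ x, q * (p * x) = 0 := fun x => by rw [← mul_assoc, hqp, zero_mul]
  have hpqx : ∀ x, p * (q * x) = 0 := fun x => by rw [← mul_assoc, hpq, zero_mul]
  have ha : a * q = p * a * q + q * a * q := by rw [← add_mul, ← add_mul, add_sub_cancel, one_mul]
  have hb : p * b = p * b * p + p * b * q := by rw [← mul_add, add_sub_cancel, mul_one]
  have h₁ := hD (p * a * q) (p * b * q) (by simp only [Commute, SemiconjBy, mul_assoc, hqpx, mul_zero])
  have h₂ := hD (q * a * q) (p * b * p) (by
    simp only [Commute, SemiconjBy, mul_assoc, hqpx, hpqx, mul_zero])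
  have h₃ := hD.trace_offDiag_mul_map_diag hp hqp a b
  have h₄ := hD.trace_diag_mul_map_offDiag hp.one_sub hqp a b
  rw [← hq, map_sub, hD.map_one, zero_sub, mul_neg, trace_neg, neg_neg] at h₄
  rw [ha, hb]
  simp only [map_add, add_mul, mul_add, trace_add, h₁, h₂, h₃, h₄, add_zero, zero_add]

theorem map_mul_of_isIdempotentElem {p : Matrix ι ι R} (hp : IsIdempotentElem p)
    (x : Matrix ι ι R) : D (p * x) = D p * x + p * D x := by
  refine ext_iff_trace_mul_left.2 fun t => ?_
  have h₁ := hD.trace_mul_one_sub_mul_map_mul hp t x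
  have h₂ := hD.trace_mul_one_sub_mul_map_mul hp.one_sub t x
  rw [sub_sub_cancel, map_sub, hD.map_one, zero_sub, mul_neg, trace_neg] at h₂
  have h₃ := hD (p * x * t * p) p (by
    simp only [Commute, SemiconjBy, mul_assoc, hp.eq, hp.mul_self_mul])
  have hpq : ∀ y, p * ((1 - p) * y) = 0 := fun y => by rw [← mul_assoc, hp.mul_one_sub_self, zero_mul]
  have h₄ := hD ((1 - p) * x * t * (1 - p)) p (by
    simp only [Commute, SemiconjBy, mul_assoc, hp.one_sub_mul_self, hpq, mul_zero])
  have ht : (t * D (p * x)).trace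
      = (t * p * D (p * x)).trace + (t * (1 - p) * D (p * x)).trace := by
    rw [← trace_add, ← add_mul, ← mul_add, add_sub_cancel, mul_one]
  have hx : (t * (p * D x)).trace
      = (t * p * D (p * x)).trace + (t * p * D ((1 - p) * x)).trace := by
    rw [← trace_add, ← mul_add, ← map_add, ← add_mul, add_sub_cancel, one_mul, mul_assoc]
  have hxt : (t * (D p * x)).trace = (p * x * t * p * D p).trace + (p * x * t * (1 - p) * D p).trace
      + ((1 - p) * x * t * p * D p).trace + ((1 - p) * x * t * (1 - p) * D p).trace := by
    rw [← trace_add, ← trace_add, ← trace_add, ← add_mul, ← add_mul, ← add_mul, ← mul_assoc,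
      trace_mul_cycle]
    congr 2
    noncomm_ring
  rw [mul_add, trace_add, ht, hx, hxt, h₁, h₂, h₃, h₄]
  ring

theorem map_mul (x y : Matrix ι ι R) : D (x * y) = D x * y + x * D y := by
  have hunit : ∀ i j, D (single i j 1 * y) = D (single i j 1) * y + single i j 1 * D y := by
    intro i j
    have hii : IsIdempotentElem (single i i (1 : R)) := by simp [IsIdempotentElem]
    obtain rfl | hij := eq_or_ne i j
    · exact hD.map_mul_of_isIdempotentElem hii y
    have hij' : IsIdempotentElem (single i i 1 + single i j (1 : R)) := by
      simp [IsIdempotentElem, add_mul, mul_add, hij.symm]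
    have h := hD.map_mul_of_isIdempotentElem hij' y
    rwa [add_mul, map_add, map_add, hD.map_mul_of_isIdempotentElem hii y, add_mul, add_mul,
      add_add_add_comm, add_right_inj] at h
  induction x using Matrix.induction_on' with
  | h_zero => simp
  | h_add a b ha hb => rw [add_mul, map_add, map_add, ha, hb, add_mul, add_mul]; abel
  | h_std_basis i j c =>
    rw [single_eq_smul_single_one, smul_mul_assoc, map_smul, map_smul, hunit, smul_add,
      smul_mul_assoc, smul_mul_assoc]

end IsTraceOrthogonalToCentralizer

end Matrix

namespace IsWeak2LocalDerivation

variable {Δ : Matrix (Fin n) (Fin n) ℂ → Matrix (Fin n) (Fin n) ℂ} (hΔ : IsWeak2LocalDerivation Δ)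
include hΔ

theorem exists_trace_mul_eq (a b t : Matrix (Fin n) (Fin n) ℂ) :
    ∃ m, (t * Δ a).trace = (t * (m * a - a * m)).trace ∧
      (t * Δ b).trace = (t * (m * b - b * m)).trace := by
  obtain ⟨D, hD, ha, hb⟩ := hΔ a b ((traceLinearMap _ ℂ ℂ).comp (LinearMap.mulLeft ℂ t))
  obtain ⟨m, hm⟩ := exists_eq_mul_sub_mul_of_map_mul D hD
  exact ⟨m, by simpa [hm] using ha, by simpa [hm] using hb⟩

theorem isTraceOrthogonalToCentralizer : IsTraceOrthogonalToCentralizer Δ := fun t a h => by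
  obtain ⟨m, hm, -⟩ := hΔ.exists_trace_mul_eq a a t
  rw [hm, trace_mul_mul_sub_mul_eq_zero_of_commute m h]

theorem trace_mul_eq_of_commute_sub {t a b : Matrix (Fin n) (Fin n) ℂ} (h : Commute t (a - b)) :
    (t * Δ a).trace = (t * Δ b).trace := by
  obtain ⟨m, ha, hb⟩ := hΔ.exists_trace_mul_eq a b t
  rw [ha, hb, ← sub_eq_zero, ← trace_sub, ← mul_sub, ← trace_mul_mul_sub_mul_eq_zero_of_commute m h]
  congr 2
  noncomm_ring

theorem isLinearMap : IsLinearMap ℂ Δ :=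
  isLinearMap_of_trace_mul_apply_eq_neg <| trace_mul_apply_eq_neg hΔ.isTraceOrthogonalToCentralizer
    fun _ _ _ => hΔ.trace_mul_eq_of_commute_sub

end IsWeak2LocalDerivation

/-- Every (non-necessarily linear) weak-2-local derivation on `Mₙ(ℂ)` is a linear derivation. -/
theorem weak2local_derivation_is_linear_derivation
    (Δ : Matrix (Fin n) (Fin n) ℂ → Matrix (Fin n) (Fin n) ℂ)
    (hΔ : IsWeak2LocalDerivation Δ) :
    IsLinearMap ℂ Δ ∧ ∀ x y, Δ (x * y) = Δ x * y + x * Δ y :=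
  ⟨hΔ.isLinearMap,
    IsTraceOrthogonalToCentralizer.map_mul (D := IsLinearMap.mk' Δ hΔ.isLinearMap)
      hΔ.isTraceOrthogonalToCentralizer⟩
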